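/- arXiv:1303.5518 — 3 statements merged into one kernel-verified Lean document; each statement's English description precedes it below -/
import Mathlib

section
/- The function g(λ) = Γ(λ + 1/2)/Γ(λ) is strictly increasing on (0, ∞), where Γ is the Gamma function. -/
/-!
Bohr–Mollerup: `log ∘ Γ` is convex, so its increments `log Γ(x + c) - log Γ(x)` are nondecreasing
in `x`, hence so is `F(x) = Γ(x + c) / Γ(x)`. For strictness, `F(x + 1) = (1 + c / x) F(x)` with a
strictly decreasing factor, so `F(x) = F(y)` for `x < y` would give `F(x + 1) > F(y + 1)`.
-/

open Real Set

theorem ConvexOn.add_sub_le_add_sub {𝕜 : Type*} [Field 𝕜] [LinearOrder 𝕜]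
    [IsStrictOrderedRing 𝕜] {s : Set 𝕜} {f : 𝕜 → 𝕜} (hf : ConvexOn 𝕜 s f) {x y h : 𝕜}
    (hx : x ∈ s) (hyh : y + h ∈ s) (hxy : x ≤ y) (hh : 0 ≤ h) :
    f (x + h) - f x ≤ f (y + h) - f y := by
  rcases hh.eq_or_lt with rfl | hh
  · simp
  have hxh : x + h ∈ s := hf.1.ordConnected.out hx hyh ⟨by linarith, by linarith⟩
  have hy : y ∈ s := hf.1.ordConnected.out hx hyh ⟨hxy, by linarith⟩
  have left := hf.secant_mono hx hxh hyh (by linarith) (by linarith) (by linarith)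
  have right := hf.secant_mono hyh hx hy (by linarith) (by linarith) hxy
  rw [add_sub_cancel_left] at left
  rw [← neg_div_neg_eq, neg_sub, neg_sub, ← neg_div_neg_eq (f y - _), neg_sub, neg_sub,
    add_sub_cancel_left] at right
  rw [← div_le_div_iff_of_pos_right hh]
  exact left.trans right

namespace Real

theorem monotoneOn_Gamma_add_div_Gamma {c : ℝ} (hc : 0 ≤ c) :
    MonotoneOn (fun x => Gamma (x + c) / Gamma x) (Ioi 0) := by
  intro x (hx : 0 < x) y (hy : 0 < y) hxy
  have hlog := convexOn_log_Gamma.add_sub_le_add_sub hx (show 0 < y + c by linarith) hxy hc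
  simp only [Function.comp_apply] at hlog
  rwa [← log_div (Gamma_pos_of_pos (by linarith)).ne' (Gamma_pos_of_pos hx).ne',
    ← log_div (Gamma_pos_of_pos (by linarith)).ne' (Gamma_pos_of_pos hy).ne',
    log_le_log_iff (by positivity) (by positivity)] at hlog

theorem Gamma_add_one_add_div_Gamma_add_one {x c : ℝ} (hx : x ≠ 0) (hxc : x + c ≠ 0) :
    Gamma (x + 1 + c) / Gamma (x + 1) = (x + c) / x * (Gamma (x + c) / Gamma x) := by
  rw [add_right_comm, Gamma_add_one hx, Gamma_add_one hxc]
  ring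

theorem strictMonoOn_Gamma_add_div_Gamma {c : ℝ} (hc : 0 < c) :
    StrictMonoOn (fun x => Gamma (x + c) / Gamma x) (Ioi 0) := by
  have hmono := monotoneOn_Gamma_add_div_Gamma hc.le
  intro x (hx : 0 < x) y (hy : 0 < y) hxy
  refine (hmono hx hy hxy.le).lt_of_ne fun heq => ?_
  have hshift := hmono (show 0 < x + 1 by linarith) (show 0 < y + 1 by linarith) (by linarith)
  simp only at heq hshift
  rw [Gamma_add_one_add_div_Gamma_add_one hx.ne' (by linarith),
    Gamma_add_one_add_div_Gamma_add_one hy.ne' (by linarith), ← heq] at hshift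
  have hpos : 0 < Gamma (x + c) / Gamma x :=
    div_pos (Gamma_pos_of_pos (by linarith)) (Gamma_pos_of_pos hx)
  have hfactor : (x + c) / x ≤ (y + c) / y := le_of_mul_le_mul_right hshift hpos
  rw [div_le_div_iff₀ hx hy] at hfactor
  nlinarith

end Real

/-- `λ ↦ Γ(λ + 1/2)/Γ(λ)` is strictly increasing on `(0, ∞)`. -/
theorem gamma_ratio_strictMono :
    StrictMonoOn (fun lam : ℝ => Real.Gamma (lam + 1 / 2) / Real.Gamma lam)
      (Set.Ioi (0 : ℝ)) :=
  Real.strictMonoOn_Gamma_add_div_Gamma one_half_pos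
end

section
/- Let K > 0 and let I : [0,∞) → ℝ satisfy I''(ξ) - (ξ/2) I'(ξ) = 0 for all ξ > 0, with I'(0) = -K·I(0) and I(0) ≠ 0. Then I(ξ) = I(0) - K I(0) ∫₀^ξ e^{t²/4} dt, and ∫₀^∞ I(ξ)² e^{-ξ²/4} dξ = ∞. -/
/-!
The equation says `(e^{-ξ²/4} I')' = 0`, so `I' = I'(0) e^{ξ²/4}` and integrating gives the formula.
Since `∫₀^ξ e^{t²/4} dt ≥ e^{(ξ-1)²/4}`, the weighted square `I(ξ)² e^{-ξ²/4}` grows at least like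
`e^{(ξ-1)²/2 - ξ²/4}`, which tends to infinity, so the weighted integral diverges.
-/

open Real MeasureTheory

open Filter Set

theorem eq_mul_exp_sq_div_four_of_hasDerivAt {g : ℝ → ℝ} (hg : ContinuousOn g (Ici 0))
    (hderiv : ∀ x, 0 < x → HasDerivAt g (x / 2 * g x) x) {ξ : ℝ} (hξ : 0 ≤ ξ) :
    g ξ = g 0 * exp (ξ ^ 2 / 4) := by
  have hconst : g ξ * exp (-(ξ ^ 2 / 4)) = g 0 := by
    have hzero : ∀ x ∈ Ioo 0 ξ,
        HasDerivWithinAt (fun x => g x * exp (-(x ^ 2 / 4))) 0 (Ioi x) x := fun x hx => by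
      have hweight :
          HasDerivAt (fun x => exp (-(x ^ 2 / 4))) (exp (-(x ^ 2 / 4)) * -(x / 2)) x := by
        convert ((hasDerivAt_pow 2 x).div_const 4).fun_neg.exp using 1
        norm_num
        ring
      exact (((hderiv x hx.1).fun_mul hweight).congr_deriv (by ring)).hasDerivWithinAt
    have := intervalIntegral.integral_eq_sub_of_hasDeriv_right_of_le hξ
      ((hg.mono Icc_subset_Ici_self).mul (by fun_prop)) hzero intervalIntegrable_const
    simp only [intervalIntegral.integral_zero, Pi.mul_apply, ne_eq, OfNat.ofNat_ne_zero,
      not_false_eq_true, zero_pow, zero_div, neg_zero, exp_zero, mul_one] at this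
    linarith
  rw [← hconst, mul_assoc, ← exp_add, neg_add_cancel, exp_zero, mul_one]

theorem eq_add_deriv_mul_integral_of_ode {I : ℝ → ℝ} (hI : ContDiff ℝ 2 I)
    (hode : ∀ ξ, 0 < ξ → deriv (deriv I) ξ - ξ / 2 * deriv I ξ = 0) {ξ : ℝ} (hξ : 0 ≤ ξ) :
    I ξ = I 0 + deriv I 0 * ∫ t in Ioc 0 ξ, exp (t ^ 2 / 4) := by
  have hI' : ContDiff ℝ 1 (deriv I) := by simpa using hI.iterate_deriv' 1 1
  have hI'_eq : ∀ x, 0 ≤ x → deriv I x = deriv I 0 * exp (x ^ 2 / 4) := fun x hx =>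
    eq_mul_exp_sq_div_four_of_hasDerivAt hI'.continuous.continuousOn
      (fun y hy => by
        rw [← sub_eq_zero.1 (hode y hy)]
        exact (hI'.differentiable one_ne_zero y).hasDerivAt) hx
  have ftc := intervalIntegral.integral_deriv_eq_sub
    (fun x _ => hI.differentiable two_ne_zero x) (hI'.continuous.intervalIntegrable 0 ξ)
  rw [intervalIntegral.integral_of_le hξ, setIntegral_congr_fun measurableSet_Ioc
    (fun x hx => hI'_eq x hx.1.le), integral_const_mul] at ftc
  linarith

theorem exp_sub_one_sq_div_four_le_integral {ξ : ℝ} (hξ : 1 ≤ ξ) :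
    exp ((ξ - 1) ^ 2 / 4) ≤ ∫ t in Ioc 0 ξ, exp (t ^ 2 / 4) := by
  have hint : IntegrableOn (fun t => exp (t ^ 2 / 4)) (Ioc 0 ξ) :=
    (continuous_exp.comp (by fun_prop)).integrableOn_Ioc
  calc exp ((ξ - 1) ^ 2 / 4) = ∫ _ in Ioc (ξ - 1) ξ, exp ((ξ - 1) ^ 2 / 4) := by simp
    _ ≤ ∫ t in Ioc (ξ - 1) ξ, exp (t ^ 2 / 4) := by
      refine setIntegral_mono_on (integrableOn_const measure_Ioc_lt_top.ne)
        (hint.mono_set (Ioc_subset_Ioc (by linarith) le_rfl)) measurableSet_Ioc fun t ht => ?_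
      gcongr
      linarith [ht.1]
    _ ≤ ∫ t in Ioc 0 ξ, exp (t ^ 2 / 4) :=
      setIntegral_mono_set hint (ae_of_all _ fun t => (exp_pos _).le)
        (ae_of_all _ (Ioc_subset_Ioc (by linarith) le_rfl))

theorem tendsto_sq_integral_mul_exp_neg_atTop :
    Tendsto (fun ξ => (∫ t in Ioc 0 ξ, exp (t ^ 2 / 4)) ^ 2 * exp (-ξ ^ 2 / 4)) atTop atTop := by
  refine tendsto_atTop_mono' atTop ((eventually_ge_atTop 8).mono fun ξ hξ => ?_) tendsto_id
  have hF := exp_sub_one_sq_div_four_le_integral (by linarith : (1 : ℝ) ≤ ξ)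
  calc ξ ≤ (ξ ^ 2 - 4 * ξ + 2) / 4 + 1 := by nlinarith
    _ ≤ exp ((ξ ^ 2 - 4 * ξ + 2) / 4) := add_one_le_exp _
    _ = exp ((ξ - 1) ^ 2 / 4) ^ 2 * exp (-ξ ^ 2 / 4) := by
      rw [← exp_nat_mul, ← exp_add]; ring_nf
    _ ≤ (∫ t in Ioc 0 ξ, exp (t ^ 2 / 4)) ^ 2 * exp (-ξ ^ 2 / 4) := by gcongr

theorem lintegral_Ioi_ofReal_eq_top_of_tendsto_atTop {f : ℝ → ℝ} (hf : Tendsto f atTop atTop)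
    (a : ℝ) : ∫⁻ x in Ioi a, ENNReal.ofReal (f x) = ⊤ := by
  obtain ⟨b, hb⟩ := eventually_atTop.1 (hf.eventually_ge_atTop 1)
  refine top_le_iff.1 ?_
  calc ⊤ = ∫⁻ _ in Ioi (max a b), 1 := by simp
    _ ≤ ∫⁻ x in Ioi (max a b), ENNReal.ofReal (f x) :=
      setLIntegral_mono' measurableSet_Ioi fun x hx =>
        ENNReal.one_le_ofReal.2 (hb x (le_max_right a b |>.trans hx.le))
    _ ≤ ∫⁻ x in Ioi a, ENNReal.ofReal (f x) :=
      lintegral_mono_set (Ioi_subset_Ioi (le_max_left a b))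

/-- a solution of `I'' - (ξ/2)I' = 0` on `(0,∞)` with Robin data
`I'(0) = -K I(0)`, `I(0) ≠ 0`, equals `I(0) - K I(0) ∫₀^ξ e^{t²/4} dt` and is not in the
Gaussian-weighted `L²` space. -/
theorem robin_zero_eigenvalue_excluded (K : ℝ) (hK : 0 < K) (I : ℝ → ℝ)
    (hI : ContDiff ℝ 2 I)
    (hode : ∀ ξ : ℝ, 0 < ξ → deriv (deriv I) ξ - ξ / 2 * deriv I ξ = 0)
    (hrobin : deriv I 0 = -K * I 0) (hI0 : I 0 ≠ 0) :
    (∀ ξ ∈ Set.Ici (0 : ℝ),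
        I ξ = I 0 - K * I 0 * ∫ t in Set.Ioc (0 : ℝ) ξ, Real.exp (t ^ 2 / 4)) ∧
      (∫⁻ ξ in Set.Ioi (0 : ℝ),
          ENNReal.ofReal ((I ξ) ^ 2 * Real.exp (-ξ ^ 2 / 4))) = ⊤ := by
  have hformula (ξ : ℝ) (hξ : ξ ∈ Ici 0) :
      I ξ = I 0 - K * I 0 * ∫ t in Ioc 0 ξ, exp (t ^ 2 / 4) := by
    rw [eq_add_deriv_mul_integral_of_ode hI hode hξ, hrobin]
    ring
  refine ⟨hformula, lintegral_Ioi_ofReal_eq_top_of_tendsto_atTop ?_ 0⟩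
  -- `(1 - K F)² = (K F)² / 2 - 1 + (K F - 2)² / 2`, and the Gaussian weight is at most `1`
  have hlower (ξ : ℝ) (hξ : ξ ∈ Ici 0) :
      (I 0 * K) ^ 2 / 2 * ((∫ t in Ioc 0 ξ, exp (t ^ 2 / 4)) ^ 2 * exp (-ξ ^ 2 / 4)) - I 0 ^ 2
        ≤ I ξ ^ 2 * exp (-ξ ^ 2 / 4) := by
    rw [hformula ξ hξ]
    set F := ∫ t in Ioc 0 ξ, exp (t ^ 2 / 4)
    have hw : exp (-ξ ^ 2 / 4) ≤ 1 := exp_le_one_iff.2 (by nlinarith)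
    nlinarith [exp_pos (-ξ ^ 2 / 4), sq_nonneg (I 0), mul_nonneg (mul_nonneg (sq_nonneg (I 0))
      (sq_nonneg (K * F - 2))) (exp_pos (-ξ ^ 2 / 4)).le]
  refine tendsto_atTop_mono' atTop ((eventually_ge_atTop 0).mono hlower) ?_
  exact tendsto_atTop_add_const_right _ _
    (tendsto_sq_integral_mul_exp_neg_atTop.const_mul_atTop (by positivity))
end

section
/- Let C > 0, s₀ ∈ ℝ, and let a : [s₀, ∞) → ℝ be a C¹ function with a(s) < 0 for all s, lim_{s→∞} a(s) = 0, and suppose there is a continuous function ν : [s₀, ∞) → [0, ∞) with lim_{s→∞} ν(s) = 0 such that |a'(s) - C a(s)²| ≤ ν(s) a(s)² for all s ≥ s₀. Then lim_{s→∞} s·a(s) = -1/C. -/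
open Filter Topology Asymptotics

/- Dividing the inequality by `a²` shows that `b = -1/a` satisfies `b' → C`; by the mean value
theorem `b(s)/s → C`, and `s · a(s) = -(b(s)/s)⁻¹ → -1/C`. -/

theorem isLittleO_id_of_hasDerivAt_tendsto_zero {E : Type*} [NormedAddCommGroup E]
    [NormedSpace ℝ E] {f f' : ℝ → E} (hf : ∀ᶠ x in atTop, HasDerivAt f (f' x) x)
    (hf' : Tendsto f' atTop (𝓝 0)) : f =o[atTop] id := by
  rw [isLittleO_iff]
  intro ε hε
  have hsmall : ∀ᶠ x in atTop, ‖f' x‖ ≤ ε / 2 := by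
    filter_upwards [hf'.eventually (Metric.closedBall_mem_nhds 0 (half_pos hε))] with x hx
    simpa using hx
  obtain ⟨s₁, hs₁⟩ := eventually_atTop.1 ((hf.and hsmall).and (eventually_ge_atTop 0))
  have hlarge := (tendsto_id.const_mul_atTop (half_pos hε)).eventually_ge_atTop ‖f s₁‖
  filter_upwards [eventually_ge_atTop s₁, hlarge] with s hs hfs₁
  have hmvt : ‖f s - f s₁‖ ≤ ε / 2 * (s - s₁) :=
    norm_image_sub_le_of_norm_deriv_le_segment'
      (fun x hx => ((hs₁ x hx.1).1.1).hasDerivWithinAt) (fun x hx => (hs₁ x hx.1).1.2)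
      s (Set.right_mem_Icc.2 hs)
  have hs₁_nonneg : 0 ≤ s₁ := (hs₁ s₁ le_rfl).2
  calc ‖f s‖ ≤ ‖f s₁‖ + ‖f s - f s₁‖ := norm_le_norm_add_norm_sub' _ _
    _ ≤ ε / 2 * s + ε / 2 * (s - s₁) := add_le_add hfs₁ hmvt
    _ ≤ ε * ‖id s‖ := by
      rw [id, Real.norm_of_nonneg (hs₁_nonneg.trans hs)]
      nlinarith

theorem tendsto_div_id_of_hasDerivAt_tendsto {f f' : ℝ → ℝ} {C : ℝ}
    (hf : ∀ᶠ x in atTop, HasDerivAt f (f' x) x) (hf' : Tendsto f' atTop (𝓝 C)) :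
    Tendsto (fun x => f x / x) atTop (𝓝 C) := by
  have hφ : (fun x => f x - C * x) =o[atTop] id := by
    refine isLittleO_id_of_hasDerivAt_tendsto_zero (f' := fun x => f' x - C) ?_ ?_
    · filter_upwards [hf] with x hx
      exact (hx.sub ((hasDerivAt_id x).const_mul C)).congr_deriv (by simp)
    · simpa using hf'.sub_const C
  have hdiv : Tendsto (fun x => (f x - C * x) / x + C) atTop (𝓝 (0 + C)) :=
    hφ.tendsto_div_nhds_zero.add_const C
  rw [zero_add] at hdiv
  refine hdiv.congr' ?_
  filter_upwards [eventually_ne_atTop 0] with x hx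
  field_simp
  ring

theorem abs_div_sq_sub_le_of_abs_sub_mul_sq_le {d x C ν : ℝ} (hx : x ≠ 0)
    (h : |d - C * x ^ 2| ≤ ν * x ^ 2) : |d / x ^ 2 - C| ≤ ν := by
  have hx2 : 0 < x ^ 2 := by positivity
  rwa [show d / x ^ 2 - C = (d - C * x ^ 2) / x ^ 2 by field_simp, abs_div, abs_of_pos hx2,
    div_le_iff₀ hx2]

theorem neutral_mode_ode_general (C s₀ : ℝ) (hC : 0 < C) (a ν : ℝ → ℝ)
    (ha_diff : ∀ s ∈ Set.Ici s₀, DifferentiableAt ℝ a s)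
    (ha_neg : ∀ s ∈ Set.Ici s₀, a s < 0)
    (hν_lim : Tendsto ν atTop (nhds 0))
    (hineq : ∀ s ∈ Set.Ici s₀, |deriv a s - C * (a s) ^ 2| ≤ ν s * (a s) ^ 2) :
    Tendsto (fun s => s * a s) atTop (nhds (-1 / C)) := by
  have ha_ne : ∀ᶠ s in atTop, a s ≠ 0 := by
    filter_upwards [eventually_ge_atTop s₀] with s hs using (ha_neg s hs).ne
  have hb_deriv : ∀ᶠ s in atTop, HasDerivAt (fun s => -(a s)⁻¹) (deriv a s / a s ^ 2) s := by
    filter_upwards [eventually_ge_atTop s₀, ha_ne] with s hs hne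
    exact ((ha_diff s hs).hasDerivAt.inv hne).neg.congr_deriv (by ring)
  have hb'_lim : Tendsto (fun s => deriv a s / a s ^ 2) atTop (𝓝 C) := by
    rw [tendsto_iff_norm_sub_tendsto_zero]
    refine squeeze_zero' (Eventually.of_forall fun _ => norm_nonneg _) ?_ hν_lim
    filter_upwards [eventually_ge_atTop s₀, ha_ne] with s hs hne
    exact abs_div_sq_sub_le_of_abs_sub_mul_sq_le hne (hineq s hs)
  have hb_div := (tendsto_div_id_of_hasDerivAt_tendsto hb_deriv hb'_lim).inv₀ hC.ne'
  rw [← neg_neg (-1 / C), neg_div, neg_neg, one_div]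
  refine hb_div.neg.congr' ?_
  filter_upwards [ha_ne, eventually_ne_atTop 0] with s hne hs
  field_simp

/-- ODE lemma for the neutral mode: if `a < 0`, `a → 0`, and
`|a' - Ca²| ≤ ν a²` with `ν → 0`, then `s·a(s) → -1/C`. -/
theorem neutral_mode_ode (C s₀ : ℝ) (hC : 0 < C) (a ν : ℝ → ℝ)
    (ha_diff : ∀ s ∈ Set.Ici s₀, DifferentiableAt ℝ a s)
    (ha_cont : ContinuousOn (deriv a) (Set.Ici s₀))
    (ha_neg : ∀ s ∈ Set.Ici s₀, a s < 0)
    (ha_lim : Tendsto a atTop (nhds 0))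
    (hν_cont : ContinuousOn ν (Set.Ici s₀))
    (hν_nonneg : ∀ s ∈ Set.Ici s₀, 0 ≤ ν s)
    (hν_lim : Tendsto ν atTop (nhds 0))
    (hineq : ∀ s ∈ Set.Ici s₀, |deriv a s - C * (a s) ^ 2| ≤ ν s * (a s) ^ 2) :
    Tendsto (fun s => s * a s) atTop (nhds (-1 / C)) :=
  neutral_mode_ode_general C s₀ hC a ν ha_diff ha_neg hν_lim hineq
end
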